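/- For all integers m ≥ 0 and n ≥ 0, ∫_0^1 x^m · P_{m,n}(x)² dx = 1/(m+2n+1). -/

import Mathlib

/-!
Write `f = X^(m+n) (X-1)^n`, so that `x^m P = f⁽ⁿ⁾ / n!` and `∫ x^m P² = (1/n!) ∫ P f⁽ⁿ⁾`.
Since `f` vanishes to order `≥ n` at both `0` and `1`, `n` integrations by parts move all
derivatives onto `P` without boundary terms. As `P` has degree `n` with leading coefficient
`C(m+2n, n)`, `P⁽ⁿ⁾ = n! C(m+2n, n)` is constant, and what is left is the Beta integral
`∫₀¹ x^(m+n) (1-x)^n = 1 / ((m+2n+1) C(m+2n, n))`.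
-/

open Polynomial

namespace Polynomial

theorem eval_iterate_derivative_eq_zero_of_pow_dvd {R : Type*} [CommRing R] {p : R[X]} {t : R}
    {a k : ℕ} (h : (X - C t) ^ a ∣ p) (hk : k < a) : (derivative^[k] p).eval t = 0 :=
  dvd_iff_isRoot.mp <| (dvd_pow_self _ (Nat.sub_ne_zero_of_lt hk)).trans
    (pow_sub_dvd_iterate_derivative_of_pow_dvd k h)

theorem iterate_derivative_eq_C_of_natDegree_le {R : Type*} [CommSemiring R] {p : R[X]} {n : ℕ}
    (h : p.natDegree ≤ n) : derivative^[n] p = C (n.factorial * p.coeff n) := by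
  have hdeg : (derivative^[n] p).natDegree = 0 :=
    Nat.eq_zero_of_le_zero <| (natDegree_iterate_derivative p n).trans (by omega)
  rw [eq_C_of_natDegree_eq_zero hdeg, coeff_iterate_derivative, zero_add,
    Nat.descFactorial_self, nsmul_eq_mul]

theorem coeff_eq_of_X_pow_mul_eq_iterate_derivative {K : Type*} [Field K] [CharZero K]
    {p f : K[X]} {m n : ℕ} (h : X ^ m * p = C (1 / (n.factorial : K)) * derivative^[n] f)
    (k : ℕ) : p.coeff k = (k + m + n).choose n * f.coeff (k + m + n) := by
  have := congrArg (coeff · (k + m)) h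
  simp only [coeff_X_pow_mul, coeff_C_mul, coeff_iterate_derivative,
    Nat.descFactorial_eq_factorial_mul_choose, nsmul_eq_mul] at this
  rw [this, Nat.cast_mul, ← mul_assoc, ← mul_assoc,
    one_div_mul_cancel (Nat.cast_ne_zero.mpr n.factorial_ne_zero), one_mul]

end Polynomial

theorem integral_eval_mul_iterate_derivative {a b : ℝ} {f : ℝ[X]} {n : ℕ}
    (ha : ∀ k < n, (derivative^[k] f).eval a = 0) (hb : ∀ k < n, (derivative^[k] f).eval b = 0)
    (g : ℝ[X]) :
    ∫ x in a..b, g.eval x * (derivative^[n] f).eval x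
      = (-1) ^ n * ∫ x in a..b, (derivative^[n] g).eval x * f.eval x := by
  induction n generalizing g with
  | zero => simp
  | succ n ih =>
    have hparts := intervalIntegral.integral_mul_deriv_eq_deriv_mul (a := a) (b := b)
      (fun x _ => g.hasDerivAt x) (fun x _ => (derivative^[n] f).hasDerivAt x)
      ((Polynomial.continuous _).intervalIntegrable a b)
      ((Polynomial.continuous _).intervalIntegrable a b)
    rw [← Function.iterate_succ_apply' derivative] at hparts
    rw [hparts, ha n n.lt_succ_self, hb n n.lt_succ_self,
      ih (fun k hk => ha k (hk.trans n.lt_succ_self)) (fun k hk => hb k (hk.trans n.lt_succ_self)),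
      Function.iterate_succ_apply]
    ring

theorem integral_pow_mul_one_sub_pow (a b : ℕ) :
    ∫ x in (0 : ℝ)..1, x ^ a * (1 - x) ^ b = 1 / ((a + b + 1) * (a + b).choose b) := by
  induction b generalizing a with
  | zero => simp [integral_pow]
  | succ b ih =>
    have hparts := intervalIntegral.integral_mul_deriv_eq_deriv_mul (a := 0) (b := 1)
      (u := fun x : ℝ => (1 - x) ^ (b + 1)) (u' := fun x => -((b + 1) * (1 - x) ^ b))
      (v := fun x : ℝ => x ^ (a + 1) / (a + 1)) (v' := fun x => x ^ a)
      (fun x _ => by simpa using ((hasDerivAt_id x).const_sub 1).fun_pow (b + 1))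
      (fun x _ => by
        convert (hasDerivAt_pow (a + 1) x).div_const ((a : ℝ) + 1) using 1
        push_cast
        field_simp)
      (Continuous.intervalIntegrable (by fun_prop) 0 1)
      (Continuous.intervalIntegrable (by fun_prop) 0 1)
    have hrec : ∫ x in (0 : ℝ)..1, x ^ a * (1 - x) ^ (b + 1)
        = (b + 1) / (a + 1) * ∫ x in (0 : ℝ)..1, x ^ (a + 1) * (1 - x) ^ b := by
      rw [intervalIntegral.integral_congr (g := fun x => (1 - x) ^ (b + 1) * x ^ a)
        (fun x _ => mul_comm _ _), hparts]
      norm_num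
      rw [← intervalIntegral.integral_const_mul]
      congr 1
      funext x
      ring
    have hchoose :
        ((a + b + 1).choose (b + 1) : ℝ) * (b + 1) = (a + b + 1).choose b * (a + 1) := by
      have := Nat.choose_succ_right_eq (a + b + 1) b
      rw [show a + b + 1 - b = a + 1 by omega] at this
      exact_mod_cast this
    have hpos : ∀ k ≤ a + b + 1, ((a + b + 1).choose k : ℝ) ≠ 0 :=
      fun k hk => Nat.cast_ne_zero.mpr (Nat.choose_pos hk).ne'
    rw [hrec, ih, show a + (b + 1) = a + 1 + b by omega, show a + 1 + b = a + b + 1 by omega]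
    field_simp [hpos b (by omega), hpos (b + 1) (by omega)]
    push_cast
    linear_combination ((a : ℝ) + b + 2) * hchoose

section RodriguesKernel

variable (R : Type*) [CommRing R]

noncomputable def rodriguesKernel (m n : ℕ) : R[X] := X ^ (m + n) * (X - C 1) ^ n

theorem rodriguesKernel_monic (m n : ℕ) : (rodriguesKernel R m n).Monic :=
  (monic_X_pow _).mul ((monic_X_sub_C 1).pow n)

theorem natDegree_rodriguesKernel [Nontrivial R] (m n : ℕ) :
    (rodriguesKernel R m n).natDegree = m + 2 * n := by
  rw [rodriguesKernel, (monic_X_pow _).natDegree_mul ((monic_X_sub_C 1).pow n), natDegree_X_pow,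
    (monic_X_sub_C 1).natDegree_pow, natDegree_X_sub_C]
  ring

variable {R}

theorem eval_zero_iterate_derivative_rodriguesKernel {m n k : ℕ} (hk : k < n) :
    (derivative^[k] (rodriguesKernel R m n)).eval 0 = 0 :=
  eval_iterate_derivative_eq_zero_of_pow_dvd (a := m + n)
    (by simp [rodriguesKernel, dvd_mul_right]) (by omega)

theorem eval_one_iterate_derivative_rodriguesKernel {m n k : ℕ} (hk : k < n) :
    (derivative^[k] (rodriguesKernel R m n)).eval 1 = 0 :=
  eval_iterate_derivative_eq_zero_of_pow_dvd (dvd_mul_left _ _) hk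

theorem natDegree_le_and_coeff_of_X_pow_mul_eq_rodriguesKernel {K : Type*} [Field K] [CharZero K]
    {p : K[X]} {m n : ℕ}
    (h : X ^ m * p = C (1 / (n.factorial : K)) * derivative^[n] (rodriguesKernel K m n)) :
    p.natDegree ≤ n ∧ p.coeff n = (m + 2 * n).choose n := by
  have hcoeff := coeff_eq_of_X_pow_mul_eq_iterate_derivative h
  refine ⟨natDegree_le_iff_coeff_eq_zero.mpr fun k hk => ?_, ?_⟩
  · rw [hcoeff, coeff_eq_zero_of_natDegree_lt (by rw [natDegree_rodriguesKernel]; omega), mul_zero]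
  · rw [hcoeff, show n + m + n = (rodriguesKernel K m n).natDegree by
      rw [natDegree_rodriguesKernel]; omega, (rodriguesKernel_monic K m n).coeff_natDegree,
      mul_one, natDegree_rodriguesKernel]

end RodriguesKernel

theorem integral_rodriguesKernel (m n : ℕ) :
    ∫ x in (0 : ℝ)..1, (rodriguesKernel ℝ m n).eval x
      = (-1) ^ n / ((m + 2 * n + 1) * (m + 2 * n).choose n) := by
  have hreflect (x : ℝ) :
      (rodriguesKernel ℝ m n).eval x = (-1) ^ n * (x ^ (m + n) * (1 - x) ^ n) := by
    simp only [rodriguesKernel, eval_mul, eval_pow, eval_X, eval_sub, eval_C]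
    rw [show x - 1 = -1 * (1 - x) by ring, mul_pow]
    ring
  simp_rw [hreflect, intervalIntegral.integral_const_mul, integral_pow_mul_one_sub_pow,
    show m + n + n = m + 2 * n by ring]
  push_cast
  ring

/-- Squared norm of `P m n` with respect to the weight `x^m` on `[0,1]`:
`∫_0^1 x^m P_{m,n}(x)² dx = 1/(m+2n+1)`. -/
theorem stmt_7 (P : ℕ → ℕ → Polynomial ℝ)
    (hP0 : ∀ m, P m 0 = 1)
    (hP : ∀ m n, 1 ≤ n →
      (X : Polynomial ℝ) ^ m * P m n
        = C (1 / (n.factorial : ℝ)) *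
            derivative^[n] (X ^ (m + n) * (X - 1) ^ n))
    (m n : ℕ) :
    ∫ x in (0:ℝ)..1, x ^ m * (P m n).eval x ^ 2
      = 1 / ((m : ℝ) + 2 * n + 1) := by
  have hrod : X ^ m * P m n
      = C (1 / (n.factorial : ℝ)) * derivative^[n] (rodriguesKernel ℝ m n) := by
    rcases n.eq_zero_or_pos with rfl | hn
    · simp [rodriguesKernel, hP0]
    · simpa [rodriguesKernel] using hP m n hn
  obtain ⟨hdeg, hlead⟩ := natDegree_le_and_coeff_of_X_pow_mul_eq_rodriguesKernel hrod
  have hweight (x : ℝ) : x ^ m * (P m n).eval x ^ 2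
      = 1 / n.factorial * ((P m n).eval x * (derivative^[n] (rodriguesKernel ℝ m n)).eval x) := by
    have := congrArg (eval x) hrod
    simp only [eval_mul, eval_pow, eval_X, eval_C] at this
    linear_combination (P m n).eval x * this
  have hchoose : ((m + 2 * n).choose n : ℝ) ≠ 0 :=
    Nat.cast_ne_zero.mpr (Nat.choose_pos (by omega)).ne'
  calc ∫ x in (0:ℝ)..1, x ^ m * (P m n).eval x ^ 2
      = 1 / n.factorial *
          ∫ x in (0:ℝ)..1, (P m n).eval x * (derivative^[n] (rodriguesKernel ℝ m n)).eval x := by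
        simp_rw [hweight, intervalIntegral.integral_const_mul]
    _ = 1 / n.factorial * ((-1) ^ n *
          ∫ x in (0:ℝ)..1, (derivative^[n] (P m n)).eval x * (rodriguesKernel ℝ m n).eval x) := by
        rw [integral_eval_mul_iterate_derivative
          (fun _ => eval_zero_iterate_derivative_rodriguesKernel)
          (fun _ => eval_one_iterate_derivative_rodriguesKernel)]
    _ = (-1) ^ n * (m + 2 * n).choose n * ∫ x in (0:ℝ)..1, (rodriguesKernel ℝ m n).eval x := by
        simp only [iterate_derivative_eq_C_of_natDegree_le hdeg, eval_C, hlead,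
          intervalIntegral.integral_const_mul]
        field_simp
    _ = 1 / ((m : ℝ) + 2 * n + 1) := by
        rw [integral_rodriguesKernel]
        field_simp
        rw [← pow_mul, Even.neg_one_pow ⟨n, by ring⟩]
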